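/- arXiv:2605.12231 — 2 statements merged into one kernel-verified Lean document; each statement's English description precedes it below -/
import Mathlib

section
/- Let μ be a Borel probability measure on E with compact support, and let u be its heat evolution. Then for every x ∈ E and every t > 0, u(x,t) > 0, the function x ↦ log u(x,t) is differentiable at x, and its gradient equals (m(x,t) − x)/(2t), where m is the tilted barycenter of μ. -/
open MeasureTheory Metric Filter Topology

/-- The heat kernel `G_t(z) = (4πt)^{-d/2} exp(-‖z‖²/(4t))` on `EuclideanSpace ℝ (Fin d)`. -/
noncomputable def heatKernel (d : ℕ) (t : ℝ) (z : EuclideanSpace ℝ (Fin d)) : ℝ :=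
  (4 * Real.pi * t) ^ (-(d : ℝ) / 2) * Real.exp (-‖z‖ ^ 2 / (4 * t))

/-- The heat evolution `u(x,t) = ∫ G_t(x - y) dμ(y)` of a measure `μ`. -/
noncomputable def heatEvolution {d : ℕ} (μ : Measure (EuclideanSpace ℝ (Fin d)))
    (x : EuclideanSpace ℝ (Fin d)) (t : ℝ) : ℝ :=
  ∫ y, heatKernel d t (x - y) ∂μ

/-- The (topological) support of a Borel measure: points all of whose neighborhoods
have positive measure. -/
def msupport {E : Type*} [TopologicalSpace E] [MeasurableSpace E] (μ : Measure E) : Set E :=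
  {x | ∀ U ∈ nhds x, 0 < μ U}

/-- The tilted barycenter `m(x,t) = (∫ y G_t(x-y) dμ(y)) / u(x,t)`. -/
noncomputable def tiltedBarycenter {d : ℕ} (μ : Measure (EuclideanSpace ℝ (Fin d)))
    (x : EuclideanSpace ℝ (Fin d)) (t : ℝ) : EuclideanSpace ℝ (Fin d) :=
  (heatEvolution μ x t)⁻¹ • ∫ y, heatKernel d t (x - y) • y ∂μ

/-!
`G_t` is positive and bounded, so `u(·,t) > 0`. Its gradient
`∇ₓ G_t(x - y) = (2t)⁻¹ G_t(x - y) (y - x)` is bounded uniformly in `x` and `y`, because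
`‖z‖ e^{-‖z‖²/4t}` is bounded; hence dominated convergence allows differentiating under the
integral: `∇u = (2t)⁻¹ ∫ G_t(x - y) (y - x) dμ(y) = (2t)⁻¹ u (m - x)`. Finally
`∇ log u = ∇u / u`.
-/

section Gradient

variable {F : Type*} [NormedAddCommGroup F] [InnerProductSpace ℝ F] [CompleteSpace F]

theorem HasGradientAt.log {f : F → ℝ} {f' x : F} (hf : HasGradientAt f f' x) (hx : f x ≠ 0) :
    HasGradientAt (fun y => Real.log (f y)) ((f x)⁻¹ • f') x := by
  rw [hasGradientAt_iff_hasFDerivAt] at hf ⊢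
  simpa using hf.log hx

theorem hasGradientAt_integral_of_dominated_of_gradient_le {α : Type*} [MeasurableSpace α]
    {μ : Measure α} {f : F → α → ℝ} {f' : F → α → F} {x₀ : F} {s : Set F} {bound : α → ℝ}
    (hs : s ∈ 𝓝 x₀) (hf_meas : ∀ᶠ x in 𝓝 x₀, AEStronglyMeasurable (f x) μ)
    (hf_int : Integrable (f x₀) μ) (hf'_meas : AEStronglyMeasurable (f' x₀) μ)
    (h_bound : ∀ᵐ a ∂μ, ∀ x ∈ s, ‖f' x a‖ ≤ bound a) (bound_integrable : Integrable bound μ)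
    (h_diff : ∀ᵐ a ∂μ, ∀ x ∈ s, HasGradientAt (f · a) (f' x a) x) :
    HasGradientAt (fun x => ∫ a, f x a ∂μ) (∫ a, f' x₀ a ∂μ) x₀ := by
  have hf'_int : Integrable (f' x₀) μ :=
    bound_integrable.mono' hf'_meas (h_bound.mono fun a ha => ha x₀ (mem_of_mem_nhds hs))
  rw [hasGradientAt_iff_hasFDerivAt]
  change HasFDerivAt _ (innerSL ℝ (∫ a, f' x₀ a ∂μ)) x₀
  rw [← (innerSL ℝ).integral_comp_comm hf'_int]
  refine hasFDerivAt_integral_of_dominated_of_fderiv_le (F' := fun x a => innerSL ℝ (f' x a))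
    hs hf_meas hf_int
    ((innerSL ℝ).continuous.comp_aestronglyMeasurable hf'_meas) ?_ bound_integrable ?_
  · filter_upwards [h_bound] with a ha x hx
    simpa using ha x hx
  · filter_upwards [h_diff] with a ha x hx
    exact (ha x hx).hasFDerivAt

end Gradient

section HeatKernel

variable {d : ℕ} {t : ℝ}

lemma heatKernel_zero (d : ℕ) (t : ℝ) : heatKernel d t 0 = (4 * Real.pi * t) ^ (-(d : ℝ) / 2) := by
  simp [heatKernel]

lemma heatKernel_pos (ht : 0 < t) (z : EuclideanSpace ℝ (Fin d)) : 0 < heatKernel d t z := by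
  unfold heatKernel
  positivity

@[fun_prop]
lemma continuous_heatKernel (d : ℕ) (t : ℝ) : Continuous (heatKernel d t) := by
  unfold heatKernel
  fun_prop

lemma heatKernel_le_heatKernel_zero (ht : 0 < t) (z : EuclideanSpace ℝ (Fin d)) :
    heatKernel d t z ≤ heatKernel d t 0 := by
  rw [heatKernel_zero, heatKernel]
  refine mul_le_of_le_one_right (by positivity) (Real.exp_le_one_iff.2 ?_)
  exact div_nonpos_of_nonpos_of_nonneg (neg_nonpos.2 (by positivity)) (by positivity)

/-- With `a = ‖z‖² / (4t)`: `‖z‖ ≤ t + a` by AM-GM, and `a e^{-a} ≤ e^{-1} ≤ 1`. -/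
lemma heatKernel_mul_norm_le (ht : 0 < t) (z : EuclideanSpace ℝ (Fin d)) :
    heatKernel d t z * ‖z‖ ≤ heatKernel d t 0 * (t + 1) := by
  set a := ‖z‖ ^ 2 / (4 * t)
  have h_amgm : ‖z‖ ≤ t + a := by
    have : ‖z‖ * (4 * t) ≤ (t + a) * (4 * t) := by
      simp only [a, add_mul, div_mul_cancel₀ _ (by positivity : 4 * t ≠ 0)]
      nlinarith [sq_nonneg (‖z‖ - 2 * t)]
    exact le_of_mul_le_mul_right this (by positivity)
  have h_decay : (t + a) * Real.exp (-a) ≤ t + 1 := by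
    have h_exp_le : Real.exp (-a) ≤ 1 := Real.exp_le_one_iff.2 (neg_nonpos.2 (by positivity))
    have h_mul_exp_le : a * Real.exp (-a) ≤ 1 :=
      (Real.mul_exp_neg_le_exp_neg_one a).trans (Real.exp_le_one_iff.2 (by norm_num))
    nlinarith
  have hG : heatKernel d t z = heatKernel d t 0 * Real.exp (-a) := by
    rw [heatKernel_zero, heatKernel, neg_div, neg_div]
  rw [hG, mul_assoc]
  gcongr
  · exact (heatKernel_pos ht 0).le
  · calc Real.exp (-a) * ‖z‖ ≤ Real.exp (-a) * (t + a) := by gcongr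
      _ ≤ t + 1 := by linarith

lemma hasGradientAt_heatKernel_sub (y x : EuclideanSpace ℝ (Fin d)) :
    HasGradientAt (fun x' => heatKernel d t (x' - y))
      ((2 * t)⁻¹ • heatKernel d t (x - y) • (y - x)) x := by
  have h_profile := (((hasDerivAt_id (‖x - y‖ ^ 2)).neg.div_const (4 * t)).exp.const_mul
    ((4 * Real.pi * t) ^ (-(d : ℝ) / 2)))
  have h := h_profile.comp_hasFDerivAt x ((hasFDerivAt_id x).sub_const y).norm_sq
  rw [hasGradientAt_iff_hasFDerivAt]
  refine h.congr_fderiv ?_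
  ext v
  simp only [Pi.neg_apply, id_eq, map_sub, ContinuousLinearMap.comp_id, smul_apply, sub_apply,
    coe_innerSL_apply, nsmul_eq_mul, Nat.cast_ofNat, smul_eq_mul, mul_inv_rev, heatKernel, map_smul,
    InnerProductSpace.toDual_apply_apply]
  ring

lemma heatKernel_sub_smul_sub_le (ht : 0 < t) (x y : EuclideanSpace ℝ (Fin d)) :
    ‖heatKernel d t (x - y) • (y - x)‖ ≤ heatKernel d t 0 * (t + 1) := by
  rw [norm_smul, Real.norm_of_nonneg (heatKernel_pos ht _).le, norm_sub_rev]
  exact heatKernel_mul_norm_le ht (x - y)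

end HeatKernel

section HeatEvolution

variable {d : ℕ} {t : ℝ} (μ : Measure (EuclideanSpace ℝ (Fin d))) [IsFiniteMeasure μ]

lemma integrable_heatKernel_sub (ht : 0 < t) (x : EuclideanSpace ℝ (Fin d)) :
    Integrable (fun y => heatKernel d t (x - y)) μ := by
  refine .of_bound (by fun_prop) (heatKernel d t 0) ?_
  refine ae_of_all _ fun y => ?_
  rw [Real.norm_of_nonneg (heatKernel_pos ht _).le]
  exact heatKernel_le_heatKernel_zero ht _

lemma integrable_heatKernel_sub_smul_sub (ht : 0 < t) (x : EuclideanSpace ℝ (Fin d)) :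
    Integrable (fun y => heatKernel d t (x - y) • (y - x)) μ :=
  .of_bound (by fun_prop) _
    (ae_of_all _ (heatKernel_sub_smul_sub_le ht x))

lemma heatEvolution_pos [NeZero μ] (ht : 0 < t) (x : EuclideanSpace ℝ (Fin d)) :
    0 < heatEvolution μ x t := by
  rw [heatEvolution, integral_pos_iff_support_of_nonneg (fun y => (heatKernel_pos ht _).le)
    (integrable_heatKernel_sub μ ht x)]
  have h_supp : Function.support (fun y => heatKernel d t (x - y)) = Set.univ :=
    Set.eq_univ_of_forall fun y => (heatKernel_pos ht _).ne'
  simpa [h_supp] using NeZero.ne μ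

lemma hasGradientAt_heatEvolution (ht : 0 < t) (x : EuclideanSpace ℝ (Fin d)) :
    HasGradientAt (fun x' => heatEvolution μ x' t)
      ((2 * t)⁻¹ • ∫ y, heatKernel d t (x - y) • (y - x) ∂μ) x := by
  rw [← integral_smul]
  refine hasGradientAt_integral_of_dominated_of_gradient_le
    (f' := fun x' y => (2 * t)⁻¹ • heatKernel d t (x' - y) • (y - x')) (s := Set.univ)
    (bound := fun _ => (2 * t)⁻¹ * (heatKernel d t 0 * (t + 1))) Filter.univ_mem
    (.of_forall fun x' => (integrable_heatKernel_sub μ ht x').aestronglyMeasurable)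
    (integrable_heatKernel_sub μ ht x)
    (by fun_prop)
    (ae_of_all _ fun y x' _ => ?_) (integrable_const _)
    (ae_of_all _ fun y x' _ => hasGradientAt_heatKernel_sub y x')
  rw [norm_smul, Real.norm_of_nonneg (by positivity)]
  gcongr
  exact heatKernel_sub_smul_sub_le ht x' y

lemma integral_heatKernel_sub_smul_sub [NeZero μ] (ht : 0 < t) (x : EuclideanSpace ℝ (Fin d)) :
    ∫ y, heatKernel d t (x - y) • (y - x) ∂μ =
      heatEvolution μ x t • (tiltedBarycenter μ x t - x) := by
  have h_split (y : EuclideanSpace ℝ (Fin d)) :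
      heatKernel d t (x - y) • y = heatKernel d t (x - y) • (y - x) + heatKernel d t (x - y) • x := by
    rw [← smul_add, sub_add_cancel]
  have h_first_moment : ∫ y, heatKernel d t (x - y) • y ∂μ =
      ∫ y, heatKernel d t (x - y) • (y - x) ∂μ + heatEvolution μ x t • x := by
    simp_rw [h_split]
    rw [integral_add (integrable_heatKernel_sub_smul_sub μ ht x)
      ((integrable_heatKernel_sub μ ht x).smul_const x), integral_smul_const, heatEvolution]
  rw [tiltedBarycenter, h_first_moment, smul_sub, smul_inv_smul₀ (heatEvolution_pos μ ht x).ne',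
    add_sub_cancel_right]

end HeatEvolution

theorem gaussian_mean_shift_general
    (d : ℕ)
    (μ : Measure (EuclideanSpace ℝ (Fin d))) [IsProbabilityMeasure μ]
    (x : EuclideanSpace ℝ (Fin d)) (t : ℝ) (ht : 0 < t) :
    0 < heatEvolution μ x t ∧
      HasGradientAt (fun x' => Real.log (heatEvolution μ x' t))
        ((2 * t)⁻¹ • (tiltedBarycenter μ x t - x)) x := by
  have hu := heatEvolution_pos μ ht x
  refine ⟨hu, ?_⟩
  have h := (hasGradientAt_heatEvolution μ ht x).log hu.ne'
  rwa [integral_heatKernel_sub_smul_sub μ ht x, smul_comm, inv_smul_smul₀ hu.ne'] at h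

theorem gaussian_mean_shift
    (d : ℕ) (hd : 1 ≤ d)
    (μ : Measure (EuclideanSpace ℝ (Fin d))) [IsProbabilityMeasure μ]
    (hcpt : IsCompact (msupport μ))
    (x : EuclideanSpace ℝ (Fin d)) (t : ℝ) (ht : 0 < t) :
    0 < heatEvolution μ x t ∧
      HasGradientAt (fun x' => Real.log (heatEvolution μ x' t))
        ((2 * t)⁻¹ • (tiltedBarycenter μ x t - x)) x :=
  gaussian_mean_shift_general d μ x t ht
end

section
/- Let μ be a Borel probability measure on E with compact support A satisfying the small-ball assumption with constants c, α, r₀, and let m be its tilted barycenter. Fix x* ∈ E. Then for every ε > 0 there exists δ > 0 such that for all x ∈ E and all t > 0 with ‖x − x*‖ + t ≤ δ, dist(m(x,t), convexHull ℝ (Π_A(x*))) ≤ ε. -/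
open MeasureTheory Metric Filter Topology

/-- Small-ball assumption: `μ(B(x,r)) ≥ c·r^α` for every `x` in the support of `μ`
and every `r ∈ (0, r₀]`. -/
def SmallBall {d : ℕ} (μ : Measure (EuclideanSpace ℝ (Fin d))) (c α r₀ : ℝ) : Prop :=
  ∀ x ∈ msupport μ, ∀ r : ℝ, 0 < r → r ≤ r₀ →
    ENNReal.ofReal (c * r ^ α) ≤ μ (Metric.closedBall x r)

/-- The set `Π_A(x)` of nearest points of `x` in `A`. -/
def nearestPts {d : ℕ} (A : Set (EuclideanSpace ℝ (Fin d)))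
    (x : EuclideanSpace ℝ (Fin d)) : Set (EuclideanSpace ℝ (Fin d)) :=
  {a ∈ A | ‖x - a‖ = Metric.infDist x A}

/-!
The tilted barycenter `m(x,t)` is the mean of the probability measure `ν ∝ G_t(x - ·) μ`, so by
Jensen's inequality for the convex function `infDist · C`, where `C` is the convex hull of
`Π_A(x*)`, it suffices that `ν` puts almost all of its mass near `C`. By compactness there is
`s > 0` such that the points of `A` within `d_A(x*) + s` of `x*` are `ε/2`-close to `C`.
For `‖x - x*‖ ≤ s/4`, the other points of `A` are farther from `x` than every point of the ball
`B` of radius `s/4` around a nearest point of `x*`, by a margin of at least `(s/2)²` in squared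
distance.
Comparing Gaussian weights, their `ν`-mass is at most `exp(-(s/4)²/t) / μ(B)`, where `μ(B) > 0`
because the centre of `B` lies in the support.
-/

open Set Real

lemma msupport_eq_support {X : Type*} [TopologicalSpace X] [MeasurableSpace X] (μ : Measure X) :
    msupport μ = μ.support :=
  Set.ext fun x => (Measure.mem_support_iff_forall x).symm

lemma convexOn_infDist {E : Type*} [SeminormedAddCommGroup E] [NormedSpace ℝ E] {C : Set E}
    (hC : Convex ℝ C) : ConvexOn ℝ univ (infDist · C) := by
  rcases C.eq_empty_or_nonempty with rfl | hne
  · simpa using convexOn_const (0 : ℝ) convex_univ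
  refine ⟨convex_univ, fun x _ y _ a b ha hb hab => le_of_forall_pos_le_add fun ε hε => ?_⟩
  obtain ⟨p, hp, hxp⟩ := (infDist_lt_iff hne).1 (lt_add_of_pos_right (infDist x C) hε)
  obtain ⟨q, hq, hyq⟩ := (infDist_lt_iff hne).1 (lt_add_of_pos_right (infDist y C) hε)
  calc infDist (a • x + b • y) C ≤ dist (a • x + b • y) (a • p + b • q) :=
        infDist_le_dist_of_mem (hC hp hq ha hb hab)
    _ ≤ a * dist x p + b * dist y q := by
        refine (dist_add_add_le _ _ _ _).trans_eq ?_
        rw [dist_smul₀, dist_smul₀, Real.norm_of_nonneg ha, Real.norm_of_nonneg hb]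
    _ ≤ a * (infDist x C + ε) + b * (infDist y C + ε) := by gcongr
    _ = a • infDist x C + b • infDist y C + ε := by
        simp only [smul_eq_mul]; linear_combination ε * hab

lemma MeasureTheory.Integrable.infDist {α E : Type*} [MeasurableSpace α] {ν : Measure α}
    [IsFiniteMeasure ν] [NormedAddCommGroup E] {f : α → E} (hf : Integrable f ν)
    (C : Set E) : Integrable (fun y => Metric.infDist (f y) C) ν := by
  refine ((integrable_const (Metric.infDist 0 C)).add hf.norm).mono'
    ((continuous_infDist_pt C).comp_aestronglyMeasurable hf.aestronglyMeasurable)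
    (ae_of_all _ fun y => ?_)
  rw [Real.norm_of_nonneg infDist_nonneg, Pi.add_apply, ← dist_zero_right]
  exact infDist_le_infDist_add_dist

lemma infDist_integral_le_integral_infDist {α E : Type*} [MeasurableSpace α] {ν : Measure α}
    [IsProbabilityMeasure ν] [NormedAddCommGroup E] [NormedSpace ℝ E] [CompleteSpace E]
    {f : α → E} (hf : Integrable f ν) {C : Set E} (hC : Convex ℝ C) :
    infDist (∫ y, f y ∂ν) C ≤ ∫ y, infDist (f y) C ∂ν :=
  (convexOn_infDist hC).map_integral_le (continuous_infDist_pt C).continuousOn isClosed_univ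
    (ae_of_all _ fun _ => mem_univ _) hf (hf.infDist C)

lemma integral_le_add_mul_measureReal {α : Type*} [MeasurableSpace α] {ν : Measure α}
    [IsProbabilityMeasure ν] {g : α → ℝ} (hg : Integrable g ν) {F : Set α}
    (hF : MeasurableSet F) {ε M : ℝ} (hε : 0 ≤ ε) (hM : ∀ᵐ y ∂ν, g y ≤ M)
    (hnear : ∀ᵐ y ∂ν, y ∉ F → g y ≤ ε) :
    ∫ y, g y ∂ν ≤ ε + M * ν.real F := by
  have hint : Integrable (F.indicator fun _ => M) ν := (integrable_const M).indicator hF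
  calc ∫ y, g y ∂ν ≤ ∫ y, ε + F.indicator (fun _ => M) y ∂ν := by
        refine integral_mono_ae hg ((integrable_const ε).add hint) ?_
        filter_upwards [hM, hnear] with y hyM hyε
        by_cases hy : y ∈ F
        · simp only [indicator_of_mem hy]; linarith
        · simp only [indicator_of_notMem hy]; linarith [hyε hy]
    _ = ε + M * ν.real F := by
        rw [integral_add (integrable_const ε) hint, integral_const, integral_indicator_const _ hF]
        simp [mul_comm]

lemma infDist_integral_le_add_diam_mul {E : Type*} [NormedAddCommGroup E] [NormedSpace ℝ E]
    [CompleteSpace E] [MeasurableSpace E] [SecondCountableTopology E] [OpensMeasurableSpace E]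
    {ν : Measure E} [IsProbabilityMeasure ν] {A C : Set E} (hA : Bornology.IsBounded A)
    (hAν : ∀ᵐ y ∂ν, y ∈ A) (hC : Convex ℝ C) (hAC : (A ∩ C).Nonempty) {F : Set E}
    (hF : MeasurableSet F) {ε : ℝ} (hε : 0 ≤ ε)
    (hnear : ∀ y ∈ A, y ∉ F → infDist y C ≤ ε) :
    infDist (∫ y, y ∂ν) C ≤ ε + diam A * ν.real F := by
  obtain ⟨a, haA, haC⟩ := hAC
  obtain ⟨R, hR⟩ := hA.subset_closedBall 0
  have hid : Integrable (fun y => y) ν := Integrable.of_bound aestronglyMeasurable_id R <| by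
    filter_upwards [hAν] with y hy
    simpa using hR hy
  refine (infDist_integral_le_integral_infDist hid hC).trans
    (integral_le_add_mul_measureReal (hid.infDist C) hF hε ?_ ?_)
  · filter_upwards [hAν] with y hy
    exact (infDist_le_dist_of_mem haC).trans (dist_le_diam_of_mem hA hy haA)
  · filter_upwards [hAν] with y hy using hnear y hy

lemma exists_pos_forall_infDist_nearestPts_lt {d : ℕ} {A : Set (EuclideanSpace ℝ (Fin d))}
    (hA : IsCompact A) (x : EuclideanSpace ℝ (Fin d)) {ε : ℝ} (hε : 0 < ε) :
    ∃ s > 0, ∀ y ∈ A, dist x y ≤ infDist x A + s → infDist y (nearestPts A x) < ε := by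
  set V := {y | infDist y (nearestPts A x) < ε}
  have hV : IsOpen V := isOpen_lt (continuous_infDist_pt _) continuous_const
  have hfar : ∀ y ∈ A \ V, infDist x A < dist x y := by
    rintro y ⟨hyA, hyV⟩
    refine (infDist_le_dist_of_mem hyA).lt_of_ne fun h => hyV ?_
    have hy : y ∈ nearestPts A x := ⟨hyA, by rw [← dist_eq_norm, h]⟩
    simpa [V, infDist_zero_of_mem hy] using hε
  obtain ⟨b, hb, hbA⟩ := (hA.diff hV).exists_forall_le' (f := (dist x ·))
    (continuous_const.dist continuous_id).continuousOn hfar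
  refine ⟨(b - infDist x A) / 2, by linarith, fun y hy hyd => ?_⟩
  by_contra hyV
  linarith [hbA y ⟨hy, hyV⟩]

lemma measureReal_tilted_mul_le {α : Type*} [MeasurableSpace α] {μ : Measure α}
    [IsFiniteMeasure μ] {f : α → ℝ} (hf : Integrable (fun y => exp (f y)) μ) {F B : Set α}
    (hF : MeasurableSet F) (hB : MeasurableSet B) {q : ℝ} (hq : 0 ≤ q)
    (hFB : ∀ y ∈ F, ∀ y' ∈ B, exp (f y) ≤ q * exp (f y')) :
    (μ.tilted f).real F * μ.real B ≤ q * μ.real F := by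
  set Z := ∫ y, exp (f y) ∂μ
  have hpt : ∀ y ∈ F, exp (f y) / Z * μ.real B ≤ q := by
    intro y hy
    have hyB : exp (f y) * μ.real B ≤ q * Z :=
      calc exp (f y) * μ.real B = ∫ _ in B, exp (f y) ∂μ := by
            rw [setIntegral_const, smul_eq_mul, mul_comm]
        _ ≤ ∫ y' in B, q * exp (f y') ∂μ :=
            setIntegral_mono_on (integrableOn_const (measure_ne_top μ B))
              (hf.integrableOn.const_mul q) hB (hFB y hy)
        _ ≤ q * Z := by
            rw [integral_const_mul]
            exact mul_le_mul_of_nonneg_left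
              (setIntegral_le_integral hf (ae_of_all _ fun _ => (exp_pos _).le)) hq
    rw [div_mul_eq_mul_div]
    exact div_le_of_le_mul₀ (integral_nonneg fun _ => (exp_pos _).le) hq hyB
  calc (μ.tilted f).real F * μ.real B = ∫ y in F, exp (f y) / Z * μ.real B ∂μ := by
        rw [measureReal_def, tilted_apply_eq_ofReal_integral' _ hF, ENNReal.toReal_ofReal
          (setIntegral_nonneg hF fun _ _ => by positivity), integral_mul_const]
    _ ≤ ∫ _ in F, q ∂μ :=
        setIntegral_mono_on ((hf.integrableOn.div_const _).mul_const _)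
          (integrableOn_const (measure_ne_top μ F)) hF hpt
    _ = q * μ.real F := by rw [setIntegral_const, smul_eq_mul, mul_comm]

lemma exists_pos_forall_mul_exp_neg_div_le (K : ℝ) {γ ε : ℝ} (hγ : 0 < γ) (hε : 0 < ε) :
    ∃ δ > 0, ∀ t, 0 < t → t ≤ δ → K * exp (-γ / t) ≤ ε := by
  refine ⟨ε * γ / (|K| + 1), by positivity, fun t ht htδ => ?_⟩
  have hexp : exp (-γ / t) ≤ t / γ := by
    rw [neg_div, exp_neg, inv_le_comm₀ (exp_pos _) (by positivity), inv_div]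
    linarith [add_one_le_exp (γ / t)]
  have htK : t / γ ≤ ε / (|K| + 1) := by
    rw [div_le_div_iff₀ hγ (by positivity)]
    rwa [le_div_iff₀ (by positivity)] at htδ
  calc K * exp (-γ / t) ≤ |K| * exp (-γ / t) :=
        mul_le_mul_of_nonneg_right (le_abs_self K) (exp_pos _).le
    _ ≤ |K| * (ε / (|K| + 1)) := by gcongr; exact hexp.trans htK
    _ ≤ ε := by
        rw [mul_div_assoc', div_le_iff₀ (by positivity)]
        nlinarith [abs_nonneg K]

section HeatTilt

variable {E : Type*} [NormedAddCommGroup E] [MeasurableSpace E]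

noncomputable def heatTilt (μ : Measure E) (x : E) (t : ℝ) : Measure E :=
  μ.tilted fun y => -‖x - y‖ ^ 2 / (4 * t)

lemma heatTilt_absolutelyContinuous (μ : Measure E) (x : E) (t : ℝ) : heatTilt μ x t ≪ μ :=
  tilted_absolutelyContinuous μ _

lemma integrable_exp_neg_sq_div [OpensMeasurableSpace E] (μ : Measure E) [IsFiniteMeasure μ]
    (x : E) {t : ℝ} (ht : 0 ≤ t) : Integrable (fun y => exp (-‖x - y‖ ^ 2 / (4 * t))) μ := by
  refine Integrable.of_bound (by fun_prop : Continuous _).aestronglyMeasurable 1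
    (ae_of_all _ fun y => ?_)
  rw [Real.norm_of_nonneg (exp_pos _).le, exp_le_one_iff]
  exact div_nonpos_of_nonpos_of_nonneg (neg_nonpos.2 (by positivity)) (by positivity)

lemma isProbabilityMeasure_heatTilt [OpensMeasurableSpace E] (μ : Measure E)
    [IsProbabilityMeasure μ] (x : E) {t : ℝ} (ht : 0 ≤ t) :
    IsProbabilityMeasure (heatTilt μ x t) :=
  isProbabilityMeasure_tilted (integrable_exp_neg_sq_div μ x ht)

lemma heatTilt_real_mul_le [OpensMeasurableSpace E] (μ : Measure E) [IsProbabilityMeasure μ]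
    {x z a : E} {t D s : ℝ} (ht : 0 < t) (hs : 0 < s) (ha : dist z a ≤ D)
    (hx : dist x z ≤ s / 4) :
    (heatTilt μ x t).real {y | D + s < dist z y} * μ.real (closedBall a (s / 4)) ≤
      exp (-(s / 4) ^ 2 / t) := by
  have hD : 0 ≤ D := dist_nonneg.trans ha
  refine (measureReal_tilted_mul_le (integrable_exp_neg_sq_div μ x ht.le)
    (isOpen_lt continuous_const (continuous_const.dist continuous_id)).measurableSet
    measurableSet_closedBall (exp_pos _).le fun y hy y' hy' => ?_).trans
    (mul_le_of_le_one_right (exp_pos _).le measureReal_le_one)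
  have hy'x : ‖x - y'‖ ≤ D + s / 2 := by
    have hy'a : dist a y' ≤ s / 4 := by rw [dist_comm]; exact mem_closedBall.1 hy'
    rw [← dist_eq_norm]
    linarith [dist_triangle4 x z a y']
  have hyx : D + 3 * s / 4 ≤ ‖x - y‖ := by
    have hzy : D + s < dist z y := hy
    rw [← dist_eq_norm]
    linarith [dist_triangle z x y, dist_comm x z]
  have hsq : 4 * (s / 4) ^ 2 + ‖x - y'‖ ^ 2 ≤ ‖x - y‖ ^ 2 := by
    nlinarith [pow_le_pow_left₀ (by positivity) hyx 2, pow_le_pow_left₀ (norm_nonneg _) hy'x 2,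
      mul_nonneg hs.le hD]
  rw [← exp_add, exp_le_exp, show -(s / 4) ^ 2 / t + -‖x - y'‖ ^ 2 / (4 * t) =
    -(4 * (s / 4) ^ 2 + ‖x - y'‖ ^ 2) / (4 * t) by field_simp; ring]
  exact div_le_div_of_nonneg_right (by linarith) (by positivity)

end HeatTilt

lemma tiltedBarycenter_eq_integral_heatTilt {d : ℕ} (μ : Measure (EuclideanSpace ℝ (Fin d)))
    (x : EuclideanSpace ℝ (Fin d)) {t : ℝ} (ht : 0 < t) :
    tiltedBarycenter μ x t = ∫ y, y ∂heatTilt μ x t := by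
  simp only [tiltedBarycenter, heatEvolution, heatKernel, heatTilt, integral_tilted]
  set K := (4 * π * t) ^ (-(d : ℝ) / 2)
  have hK : K ≠ 0 := (rpow_pos_of_pos (by positivity) _).ne'
  simp only [mul_smul, integral_smul, integral_const_mul, div_eq_inv_mul]
  rw [mul_inv_rev, mul_smul, inv_smul_smul₀ hK]

lemma infDist_tiltedBarycenter_le {d : ℕ} {μ : Measure (EuclideanSpace ℝ (Fin d))}
    [IsProbabilityMeasure μ] {A : Set (EuclideanSpace ℝ (Fin d))} (hA : Bornology.IsBounded A)
    (hAμ : ∀ᵐ y ∂μ, y ∈ A) {z a x : EuclideanSpace ℝ (Fin d)} (ha : a ∈ nearestPts A z)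
    {s ε t : ℝ} (hs : 0 < s) (hε : 0 ≤ ε) (ht : 0 < t) (hx : ‖x - z‖ ≤ s / 4)
    (hnear : ∀ y ∈ A, dist z y ≤ infDist z A + s → infDist y (nearestPts A z) < ε)
    (hB : 0 < μ.real (closedBall a (s / 4))) :
    infDist (tiltedBarycenter μ x t) (convexHull ℝ (nearestPts A z)) ≤
      ε + diam A / μ.real (closedBall a (s / 4)) * exp (-(s / 4) ^ 2 / t) := by
  have := isProbabilityMeasure_heatTilt μ x ht.le
  set F := {y | infDist z A + s < dist z y}
  have hF : MeasurableSet F :=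
    (isOpen_lt continuous_const (continuous_const.dist continuous_id)).measurableSet
  have hfar : diam A * (heatTilt μ x t).real F ≤
      diam A / μ.real (closedBall a (s / 4)) * exp (-(s / 4) ^ 2 / t) := by
    rw [div_mul_eq_mul_div, le_div_iff₀ hB, mul_assoc]
    refine mul_le_mul_of_nonneg_left (heatTilt_real_mul_le μ ht hs ?_ ?_) diam_nonneg
    · rw [dist_eq_norm, ha.2]
    · rwa [dist_eq_norm]
  have hnearC : ∀ y ∈ A, y ∉ F → infDist y (convexHull ℝ (nearestPts A z)) ≤ ε :=
    fun y hy hyF => (infDist_le_infDist_of_subset (subset_convexHull ℝ _) ⟨a, ha⟩).trans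
      (hnear y hy (not_lt.1 hyF)).le
  rw [tiltedBarycenter_eq_integral_heatTilt μ x ht]
  refine (infDist_integral_le_add_diam_mul hA ((heatTilt_absolutelyContinuous μ x t).ae_le hAμ)
    (convex_convexHull ℝ _) ⟨a, ha.1, subset_convexHull ℝ _ ha⟩ hF hε hnearC).trans
    (by linarith)

theorem barycenter_concentration_general
    (d : ℕ)
    (μ : Measure (EuclideanSpace ℝ (Fin d))) [IsProbabilityMeasure μ]
    (A : Set (EuclideanSpace ℝ (Fin d))) (hA : A = msupport μ) (hAcpt : IsCompact A)
    (xstar : EuclideanSpace ℝ (Fin d)) :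
    ∀ ε : ℝ, 0 < ε → ∃ δ : ℝ, 0 < δ ∧
      ∀ (x : EuclideanSpace ℝ (Fin d)) (t : ℝ), 0 < t → ‖x - xstar‖ + t ≤ δ →
        Metric.infDist (tiltedBarycenter μ x t)
          (convexHull ℝ (nearestPts A xstar)) ≤ ε := by
  intro ε hε
  have hAμ : ∀ᵐ y ∂μ, y ∈ A := hA ▸ msupport_eq_support μ ▸ Measure.support_mem_ae
  obtain ⟨a, haA, ha⟩ := hAcpt.exists_infDist_eq_dist hAμ.exists xstar
  have haP : a ∈ nearestPts A xstar := ⟨haA, by rw [← dist_eq_norm, ha]⟩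
  obtain ⟨s, hs, hnear⟩ := exists_pos_forall_infDist_nearestPts_lt hAcpt xstar (half_pos hε)
  set B := closedBall a (s / 4)
  have haμ : a ∈ msupport μ := hA ▸ haA
  have hB : 0 < μ.real B :=
    ENNReal.toReal_pos (haμ B (closedBall_mem_nhds a (by positivity))).ne' (measure_ne_top μ B)
  obtain ⟨δ, hδ, hsmall⟩ := exists_pos_forall_mul_exp_neg_div_le (diam A / μ.real B)
    (by positivity : 0 < (s / 4) ^ 2) (half_pos hε)
  refine ⟨min (s / 4) δ, by positivity, fun x t ht hxt => ?_⟩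
  have hxs : ‖x - xstar‖ ≤ s / 4 := by linarith [min_le_left (s / 4) δ]
  have htδ : t ≤ δ := by linarith [min_le_right (s / 4) δ, norm_nonneg (x - xstar)]
  calc infDist (tiltedBarycenter μ x t) (convexHull ℝ (nearestPts A xstar))
      ≤ ε / 2 + diam A / μ.real B * exp (-(s / 4) ^ 2 / t) :=
        infDist_tiltedBarycenter_le hAcpt.isBounded hAμ haP hs (half_pos hε).le ht hxs hnear hB
    _ ≤ ε := by linarith [hsmall t ht htδ]

theorem barycenter_concentration
    (d : ℕ) (hd : 1 ≤ d)
    (μ : Measure (EuclideanSpace ℝ (Fin d))) [IsProbabilityMeasure μ]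
    (A : Set (EuclideanSpace ℝ (Fin d))) (hA : A = msupport μ) (hAcpt : IsCompact A)
    (c α r₀ : ℝ) (hc : 0 < c) (hα : 0 ≤ α) (hr₀ : 0 < r₀)
    (hSB : SmallBall μ c α r₀)
    (xstar : EuclideanSpace ℝ (Fin d)) :
    ∀ ε : ℝ, 0 < ε → ∃ δ : ℝ, 0 < δ ∧
      ∀ (x : EuclideanSpace ℝ (Fin d)) (t : ℝ), 0 < t → ‖x - xstar‖ + t ≤ δ →
        Metric.infDist (tiltedBarycenter μ x t)
          (convexHull ℝ (nearestPts A xstar)) ≤ ε :=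
  barycenter_concentration_general d μ A hA hAcpt xstar
end
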